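/- For every hypergraph H with maximum vertex degree Δ ≥ 2, tw([H]₂) ≥ (stw(H) − 1)/(Δ − 1) − 1; equivalently, stw(H) ≤ (Δ − 1)(tw([H]₂) + 1) + 1. -/

import Mathlib

open Finset

/-- A simple, loopless hypergraph: hyperedges have at least 2 vertices, no hyperedge
contains another, and every vertex lies in some hyperedge. -/
structure SHypergraph (V : Type) [Fintype V] [DecidableEq V] where
  F : Finset (Finset V)
  no_loops : ∀ f ∈ F, 2 ≤ f.card
  simple : ∀ f ∈ F, ∀ g ∈ F, f ⊆ g → f = g
  cover : ∀ v : V, ∃ f ∈ F, v ∈ f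

variable {V : Type} [Fintype V] [DecidableEq V]

/-- A hypergraph is linear if distinct hyperedges share at most one vertex. -/
def SHypergraph.Linear (H : SHypergraph V) : Prop :=
  ∀ f ∈ H.F, ∀ g ∈ H.F, f ≠ g → (f ∩ g).card ≤ 1

/-- The degree of a vertex: the number of hyperedges containing it. -/
def SHypergraph.deg (H : SHypergraph V) (v : V) : ℕ :=
  (H.F.filter (fun f => v ∈ f)).card

/-- The 2-section of a hypergraph. -/
def SHypergraph.twoSection (H : SHypergraph V) : SimpleGraph V where
  Adj u v := u ≠ v ∧ ∃ f ∈ H.F, u ∈ f ∧ v ∈ f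
  symm := ⟨by
    rintro u v ⟨h, f, hf, h1, h2⟩
    exact ⟨h.symm, f, hf, h2, h1⟩⟩
  loopless := ⟨fun v h => h.1 rfl⟩

/-- The rank: the maximum size of a hyperedge. -/
def SHypergraph.rank (H : SHypergraph V) : ℕ := H.F.sup Finset.card

/-- The anti-rank: the minimum size of a hyperedge. -/
noncomputable def SHypergraph.antiRank (H : SHypergraph V) : ℕ :=
  sInf (Finset.card '' (H.F : Set (Finset V)))

/-- The minimum degree. -/
noncomputable def SHypergraph.minDegree (H : SHypergraph V) : ℕ :=
  sInf (Set.range H.deg)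

/-- The maximum degree. -/
def SHypergraph.maxDegree (H : SHypergraph V) : ℕ :=
  Finset.univ.sup H.deg

/-- The average rank: the average size of a hyperedge. -/
noncomputable def SHypergraph.avgRank (H : SHypergraph V) : ℝ :=
  (∑ f ∈ H.F, (f.card : ℝ)) / H.F.card

/-- A tree decomposition of a graph. -/
structure TreeDecomp {W : Type} (G : SimpleGraph W) where
  τ : Type
  finT : Fintype τ
  tree : SimpleGraph τ
  conn : tree.Connected
  acyc : tree.IsAcyclic
  bags : τ → Finset W
  /-- (T1): the bags containing a vertex form a nonempty connected subtree. -/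
  bags_conn : ∀ v : W, (tree.induce {t | v ∈ bags t}).Connected
  /-- (T2): every edge is contained in some bag. -/
  bags_edge : ∀ u v : W, G.Adj u v → ∃ t, u ∈ bags t ∧ v ∈ bags t

/-- The width of a tree decomposition: max bag size minus one. -/
noncomputable def TreeDecomp.width {W : Type} {G : SimpleGraph W} (d : TreeDecomp G) : ℕ :=
  letI := d.finT
  (Finset.univ.sup fun t => (d.bags t).card) - 1

/-- The treewidth of a graph. -/
noncomputable def treewidth {W : Type} (G : SimpleGraph W) : ℕ :=
  sInf {n | ∃ d : TreeDecomp G, d.width = n}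

/-- A supertree decomposition of a hypergraph. -/
structure SupertreeDecomp (H : SHypergraph V) extends TreeDecomp H.twoSection where
  lam : τ → Finset (Finset V)
  lam_sub : ∀ t, lam t ⊆ H.F
  /-- (TII): every bag is covered by its hyperedges. -/
  bag_cover : ∀ t, ∀ v ∈ bags t, ∃ f ∈ lam t, v ∈ f
  /-- (TIII): the nodes containing a hyperedge form a nonempty connected subtree. -/
  lam_conn : ∀ f ∈ H.F, (tree.induce {t | f ∈ lam t}).Connected
  /-- (TIV): intersecting hyperedges appear together in some bag. -/
  lam_meet : ∀ f ∈ H.F, ∀ g ∈ H.F, (f ∩ g).Nonempty → ∃ t, f ∈ lam t ∧ g ∈ lam t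

/-- The width of a supertree decomposition: max number of hyperedges in a bag. -/
noncomputable def SupertreeDecomp.width {H : SHypergraph V} (d : SupertreeDecomp H) : ℕ :=
  letI := d.finT
  Finset.univ.sup fun t => (d.lam t).card

/-- The supertree width of a hypergraph. -/
noncomputable def stw (H : SHypergraph V) : ℕ :=
  sInf {n | ∃ d : SupertreeDecomp H, d.width = n}

/-- The line graph of a hypergraph. -/
def SHypergraph.lineGraph (H : SHypergraph V) : SimpleGraph {f // f ∈ H.F} where
  Adj f g := f ≠ g ∧ ((f : Finset V) ∩ (g : Finset V)).Nonempty
  symm := ⟨by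
    rintro f g ⟨h, hfg⟩
    exact ⟨h.symm, by rwa [Finset.inter_comm]⟩⟩
  loopless := ⟨fun f h => h.1 rfl⟩

/-- A hypergraph is 2-regular if every vertex has degree exactly 2. -/
def SHypergraph.TwoRegular (H : SHypergraph V) : Prop := ∀ v : V, H.deg v = 2

/-- For a 2-regular linear hypergraph, the dual is a simple graph on the hyperedges:
two hyperedges are adjacent iff some vertex lies in both. -/
def SHypergraph.dualGraph (H : SHypergraph V) : SimpleGraph {f // f ∈ H.F} where
  Adj f g := f ≠ g ∧ ∃ v : V, v ∈ (f : Finset V) ∧ v ∈ (g : Finset V)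
  symm := ⟨by
    rintro f g ⟨h, v, h1, h2⟩
    exact ⟨h.symm, v, h2, h1⟩⟩
  loopless := ⟨fun f h => h.1 rfl⟩

/-!
Start from a tree decomposition of `[H]₂` whose bags have at most `k + 1` vertices. A hyperedge
is a clique of `[H]₂`, so by the Helly property of subtrees of a tree it lies in a single bag;
below such a bag hang a new leaf for the hyperedge. Fix for every vertex `v` one hyperedge `e v`
containing it. An old node keeps, for each vertex `v` of its bag, the at most `Δ - 1` hyperedges at
`v` other than `e v`; the leaf of `f` keeps `f` and those hyperedges for the vertices of `f`. Every
node then holds at most `(Δ - 1)(k + 1) + 1` hyperedges, and two hyperedges through `v` meet at the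
leaf of whichever of them is `e v` (of either, if neither is).
-/

namespace SimpleGraph

variable {W : Type*} {G : SimpleGraph W} {s t u : Set W}

theorem induce_connected_of_subsingleton (hs : s.Subsingleton) (hne : s.Nonempty) :
    (G.induce s).Connected :=
  haveI := hs.coe_sort
  haveI := hne.to_subtype
  ⟨Preconnected.of_subsingleton⟩

theorem exists_isPath_support_subset_of_preconnected (hs : (G.induce s).Preconnected)
    {a b : W} (ha : a ∈ s) (hb : b ∈ s) :
    ∃ p : G.Walk a b, p.IsPath ∧ ∀ x ∈ p.support, x ∈ s := by
  classical
  obtain ⟨w⟩ := hs ⟨a, ha⟩ ⟨b, hb⟩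
  refine ⟨(w.map (Embedding.induce s).toHom).bypass, Walk.bypass_isPath _, fun x hx => ?_⟩
  have hx' : x ∈ (w.map (Embedding.induce s).toHom).support :=
    Walk.support_bypass_subset_support _ hx
  rw [Walk.support_map] at hx'
  obtain ⟨y, -, rfl⟩ := List.mem_map.1 hx'
  exact y.2

namespace IsAcyclic

variable (hG : G.IsAcyclic)
include hG

theorem support_subset_of_isPath (hs : (G.induce s).Preconnected) {a b : W} {p : G.Walk a b}
    (hp : p.IsPath) (ha : a ∈ s) (hb : b ∈ s) : ∀ x ∈ p.support, x ∈ s := by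
  obtain ⟨q, hq, hqs⟩ := exists_isPath_support_subset_of_preconnected hs ha hb
  obtain rfl : q = p := congrArg Subtype.val ((hG.subsingleton_path a b).elim ⟨q, hq⟩ ⟨p, hp⟩)
  exact hqs

theorem induce_inter_preconnected (hs : (G.induce s).Preconnected)
    (ht : (G.induce t).Preconnected) : (G.induce (s ∩ t)).Preconnected := by
  rintro ⟨a, has, hat⟩ ⟨b, hbs, hbt⟩
  obtain ⟨p, hp, hps⟩ := exists_isPath_support_subset_of_preconnected hs has hbs
  have hpt := hG.support_subset_of_isPath ht hp hat hbt
  exact ⟨p.induce (s ∩ t) fun x hx => ⟨hps x hx, hpt x hx⟩⟩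

theorem mem_or_mem_of_adj (hs : (G.induce s).Preconnected) (ht : (G.induce t).Preconnected)
    (hst : (s ∩ t).Nonempty) {x y : W} (hx : x ∈ s) (hy : y ∈ t) (hxy : G.Adj x y) :
    x ∈ t ∨ y ∈ s := by
  obtain ⟨z, hzs, hzt⟩ := hst
  obtain ⟨p, hp, hps⟩ := exists_isPath_support_subset_of_preconnected hs hzs hx
  obtain ⟨q, hq, hqt⟩ := exists_isPath_support_subset_of_preconnected ht hzt hy
  by_contra! h
  exact h.1 <| hqt x <|
    hG.mem_support_of_ne_mem_support_of_adj_of_isPath hq hp hxy.symm fun hyp => h.2 (hps y hyp)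

theorem exists_mem_support_inter (ht : (G.induce t).Preconnected)
    (hu : (G.induce u).Preconnected) (htu : (t ∩ u).Nonempty) {a b : W} (w : G.Walk a b)
    (ha : a ∈ t) (hb : b ∈ u) (hw : ∀ x ∈ w.support, x ∈ t ∪ u) :
    ∃ m ∈ w.support, m ∈ t ∧ m ∈ u := by
  induction w with
  | nil => exact ⟨_, Walk.start_mem_support _, ha, hb⟩
  | @cons a c b hac w ih =>
    by_cases hau : a ∈ u
    · exact ⟨a, Walk.start_mem_support _, ha, hau⟩
    have hct : c ∈ t := by
      rcases hw c (by simp) with hct | hcu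
      · exact hct
      · exact (hG.mem_or_mem_of_adj ht hu htu ha hcu hac).resolve_left hau
    obtain ⟨m, hm, hmt, hmu⟩ := ih hct hb fun x hx => hw x (by simp [hx])
    exact ⟨m, by simp [hm], hmt, hmu⟩

theorem inter_inter_nonempty (hs : (G.induce s).Preconnected) (ht : (G.induce t).Preconnected)
    (hu : (G.induce u).Preconnected) (hst : (s ∩ t).Nonempty) (hsu : (s ∩ u).Nonempty)
    (htu : (t ∩ u).Nonempty) : (s ∩ t ∩ u).Nonempty := by
  classical
  obtain ⟨a, has, hat⟩ := hst
  obtain ⟨b, hbs, hbu⟩ := hsu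
  obtain ⟨c, hct, hcu⟩ := htu
  obtain ⟨p, -, hpt⟩ := exists_isPath_support_subset_of_preconnected ht hat hct
  obtain ⟨q, -, hqu⟩ := exists_isPath_support_subset_of_preconnected hu hcu hbu
  set r := (p.append q).bypass
  have hrtu : ∀ x ∈ r.support, x ∈ t ∪ u := fun x hx => by
    rcases (Walk.mem_support_append_iff _ _).1 (Walk.support_bypass_subset_support _ hx) with h | h
    exacts [Or.inl (hpt x h), Or.inr (hqu x h)]
  have hrs := hG.support_subset_of_isPath hs (Walk.bypass_isPath (p.append q)) has hbs
  obtain ⟨m, hm, hmt, hmu⟩ := hG.exists_mem_support_inter ht hu ⟨c, hct, hcu⟩ r hat hbu hrtu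
  exact ⟨m, ⟨hrs m hm, hmt⟩, hmu⟩

theorem exists_forall_mem_of_pairwise_inter_nonempty {ι : Type*} {I : Finset ι}
    (hI : I.Nonempty) {S : ι → Set W} (hS : ∀ i ∈ I, (G.induce (S i)).Preconnected)
    (hSS : ∀ i ∈ I, ∀ j ∈ I, (S i ∩ S j).Nonempty) : ∃ x, ∀ i ∈ I, x ∈ S i := by
  induction hI using Finset.Nonempty.cons_induction generalizing S with
  | singleton a =>
    obtain ⟨x, hx, -⟩ := hSS a (by simp) a (by simp)
    exact ⟨x, by simpa using hx⟩
  | cons a I ha hI ih =>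
    obtain ⟨x, hx⟩ := ih (S := fun i => S i ∩ S a)
      (fun i hi => hG.induce_inter_preconnected (hS i (by simp [hi])) (hS a (by simp)))
      fun i hi j hj => by
        obtain ⟨y, ⟨hyi, hyj⟩, hya⟩ := hG.inter_inter_nonempty (hS i (by simp [hi]))
          (hS j (by simp [hj])) (hS a (by simp)) (hSS i (by simp [hi]) j (by simp [hj]))
          (hSS i (by simp [hi]) a (by simp)) (hSS j (by simp [hj]) a (by simp))
        exact ⟨y, ⟨hyi, hya⟩, hyj, hya⟩
    refine ⟨x, fun i hi => ?_⟩
    rcases Finset.mem_cons.1 hi with rfl | hi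
    exacts [(hx _ hI.choose_spec).2, (hx i hi).1]

end IsAcyclic

variable {τ L : Type*} (T : SimpleGraph τ) (o : L → τ)

def attachLeaves : SimpleGraph (τ ⊕ L) where
  Adj
    | .inl a, .inl b => T.Adj a b
    | .inl a, .inr l => o l = a
    | .inr l, .inl a => o l = a
    | .inr _, .inr _ => False
  symm := ⟨by rintro (a | l) (b | l') h <;> first | exact h.symm | exact h⟩
  loopless := ⟨by rintro (a | l) h <;> first | exact T.loopless.irrefl a h | exact h⟩

variable {T o}

theorem attachLeaves_adj_inr {l : L} {x : τ ⊕ L} :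
    (T.attachLeaves o).Adj (.inr l) x ↔ x = .inl (o l) := by
  rcases x with a | l'
  · exact ⟨fun h => congrArg Sum.inl (Eq.symm (h : o l = a)), fun h => (Sum.inl_injective h).symm⟩
  · exact ⟨False.elim, Sum.inr_ne_inl.elim⟩

theorem induce_attachLeaves_connected {S : Set (τ ⊕ L)}
    (hS : (T.induce (Sum.inl ⁻¹' S)).Connected) (hleaf : ∀ l, .inr l ∈ S → .inl (o l) ∈ S) :
    ((T.attachLeaves o).induce S).Connected := by
  let φ : T.induce (Sum.inl ⁻¹' S) →g (T.attachLeaves o).induce S :=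
    ⟨fun a => ⟨.inl a.1, a.2⟩, fun h => h⟩
  obtain ⟨a₀⟩ := hS.nonempty
  have reach (a : Sum.inl ⁻¹' S) : ((T.attachLeaves o).induce S).Reachable (φ a₀) (φ a) :=
    (hS.preconnected a₀ a).map φ
  refine (connected_iff_exists_forall_reachable _).2 ⟨φ a₀, ?_⟩
  rintro ⟨a | l, hx⟩
  · exact reach ⟨a, hx⟩
  · exact (reach ⟨o l, hleaf l hx⟩).trans (Adj.reachable rfl)

theorem Connected.attachLeaves (hT : T.Connected) : (T.attachLeaves o).Connected := by
  rw [← (induceUnivIso _).connected_iff]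
  refine induce_attachLeaves_connected ?_ fun _ _ => trivial
  rwa [Set.preimage_univ, (induceUnivIso _).connected_iff]

theorem IsAcyclic.attachLeaves (hT : T.IsAcyclic) : (T.attachLeaves o).IsAcyclic := by
  intro x c hc
  by_cases hleaf : ∃ l, Sum.inr l ∈ c.support
  · classical
    obtain ⟨l, hl⟩ := hleaf
    have hc' := hc.rotate hl
    -- a leaf has only one neighbour, but a cycle leaves and returns along different edges
    apply hc'.snd_ne_penultimate
    rw [attachLeaves_adj_inr.1 ((c.rotate _ hl).adj_snd hc'.not_nil),
      attachLeaves_adj_inr.1 ((c.rotate _ hl).adj_penultimate hc'.not_nil).symm]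
  · push Not at hleaf
    have hinl : ∀ y ∈ c.support, y ∈ Set.range Sum.inl := by
      rintro (a | l) hy
      exacts [⟨a, rfl⟩, (hleaf l hy).elim]
    let f : (T.attachLeaves o).induce (Set.range Sum.inl) →g T :=
      ⟨fun y => Sum.elim id o y.1, fun {y z} h => by
        rcases y with ⟨_, a, rfl⟩
        rcases z with ⟨_, b, rfl⟩
        exact h⟩
    have hf : Function.Injective f := by
      rintro ⟨_, a, rfl⟩ ⟨_, b, rfl⟩ h
      simp_all [f]
    refine hT.comap f hf (c.induce _ hinl) ?_
    rw [← Walk.isCycle_map_iff_of_injective (f := (Embedding.induce _).toHom)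
      Subtype.val_injective, Walk.map_induce]
    exact hc

end SimpleGraph

open SimpleGraph

namespace TreeDecomp

variable {W : Type} {G : SimpleGraph W}

def single [Fintype W] (G : SimpleGraph W) : TreeDecomp G where
  τ := Unit
  finT := inferInstance
  tree := ⊥
  conn := connected_bot_iff.2 ⟨inferInstance, inferInstance⟩
  acyc := isAcyclic_bot
  bags _ := Finset.univ
  bags_conn v := induce_connected_of_subsingleton Set.subsingleton_of_subsingleton
    ⟨(), Finset.mem_univ v⟩
  bags_edge u v _ := ⟨(), Finset.mem_univ u, Finset.mem_univ v⟩

theorem exists_width_eq_treewidth [Fintype W] (G : SimpleGraph W) :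
    ∃ d : TreeDecomp G, d.width = treewidth G :=
  Nat.sInf_mem (s := {n | ∃ d : TreeDecomp G, d.width = n}) ⟨_, single G, rfl⟩

theorem card_bags_le_width_add_one (d : TreeDecomp G) (t : d.τ) :
    (d.bags t).card ≤ d.width + 1 := by
  let := d.finT
  have := Finset.le_sup (f := fun t => (d.bags t).card) (Finset.mem_univ t)
  unfold width
  omega

theorem exists_subset_bags_of_pairwise_adj (d : TreeDecomp G) {s : Finset W}
    (hs : (s : Set W).Pairwise G.Adj) : ∃ t, s ⊆ d.bags t := by
  rcases s.eq_empty_or_nonempty with rfl | hne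
  · exact ⟨d.conn.nonempty.some, Finset.empty_subset _⟩
  obtain ⟨t, ht⟩ := d.acyc.exists_forall_mem_of_pairwise_inter_nonempty hne
    (S := fun v => {t | v ∈ d.bags t}) (fun v _ => (d.bags_conn v).preconnected)
    fun u hu v hv => by
      rcases eq_or_ne u v with rfl | huv
      · obtain ⟨⟨t, ht⟩⟩ := (d.bags_conn u).nonempty
        exact ⟨t, ht, ht⟩
      · obtain ⟨t, htu, htv⟩ := d.bags_edge u v (hs hu hv huv)
        exact ⟨t, htu, htv⟩
  exact ⟨t, ht⟩

end TreeDecomp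

namespace SHypergraph

variable (H : SHypergraph V) (e : V → Finset V)

def otherEdges (v : V) : Finset (Finset V) :=
  (H.F.filter (v ∈ ·)).erase (e v)

variable {H e}

theorem mem_otherEdges {v : V} {g : Finset V} :
    g ∈ H.otherEdges e v ↔ g ≠ e v ∧ g ∈ H.F ∧ v ∈ g := by
  simp [otherEdges]

theorem card_otherEdges_le (he : ∀ v, e v ∈ H.F ∧ v ∈ e v) (v : V) :
    (H.otherEdges e v).card ≤ H.maxDegree - 1 := by
  rw [otherEdges, Finset.card_erase_of_mem (Finset.mem_filter.2 (he v))]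
  exact Nat.sub_le_sub_right (Finset.le_sup (f := H.deg) (Finset.mem_univ v)) 1

end SHypergraph

namespace TreeDecomp

open SHypergraph

variable {H : SHypergraph V} (d : TreeDecomp H.twoSection) (e : V → Finset V)

/- A vertex whose only hyperedge is `e v` is covered by nothing kept at an old node, so it
survives only in the leaf of `e v`. -/
def supertreeBags : d.τ ⊕ {f // f ∈ H.F} → Finset V
  | .inl t => (d.bags t).filter fun v => (H.otherEdges e v).Nonempty
  | .inr f => f.1

def supertreeLam : d.τ ⊕ {f // f ∈ H.F} → Finset (Finset V)
  | .inl t => (d.bags t).biUnion (H.otherEdges e)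
  | .inr f => insert f.1 (f.1.biUnion (H.otherEdges e))

variable {d e}

theorem mem_supertreeLam_inl {t : d.τ} {g : Finset V} :
    g ∈ d.supertreeLam e (.inl t) ↔ ∃ v ∈ d.bags t, g ∈ H.otherEdges e v :=
  Finset.mem_biUnion

theorem mem_supertreeLam_inr {f : {f // f ∈ H.F}} {g : Finset V} :
    g ∈ d.supertreeLam e (.inr f) ↔ g = f.1 ∨ ∃ v ∈ f.1, g ∈ H.otherEdges e v := by
  simp [supertreeLam]

variable {o : {f // f ∈ H.F} → d.τ}

theorem supertreeBags_connected (ho : ∀ f, f.1 ⊆ d.bags (o f)) (he : ∀ v, e v ∈ H.F ∧ v ∈ e v)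
    (v : V) : ((d.tree.attachLeaves o).induce {x | v ∈ d.supertreeBags e x}).Connected := by
  by_cases hv : (H.otherEdges e v).Nonempty
  · apply induce_attachLeaves_connected
    · have : Sum.inl ⁻¹' {x | v ∈ d.supertreeBags e x} = {t | v ∈ d.bags t} := by
        ext t
        simp [supertreeBags, hv]
      rw [this]
      exact d.bags_conn v
    · intro f hvf
      exact Finset.mem_filter.2 ⟨ho f hvf, hv⟩
  · refine induce_connected_of_subsingleton
      ((Set.subsingleton_singleton (a := Sum.inr ⟨e v, (he v).1⟩)).anti ?_)
      ⟨.inr ⟨e v, (he v).1⟩, (he v).2⟩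
    rintro (t | f) hvx
    · exact absurd (Finset.mem_filter.1 hvx).2 hv
    · by_contra hf
      exact hv ⟨f.1, mem_otherEdges.2 ⟨fun h => hf (by simp [← h]), f.2, hvx⟩⟩

theorem supertreeLam_connected (ho : ∀ f, f.1 ⊆ d.bags (o f)) {g : Finset V} (hg : g ∈ H.F) :
    ((d.tree.attachLeaves o).induce {x | g ∈ d.supertreeLam e x}).Connected := by
  by_cases hA : ∃ v, g ∈ H.otherEdges e v
  · obtain ⟨v₀, hv₀⟩ := hA
    have hv₀g := (mem_otherEdges.1 hv₀).2.2
    apply induce_attachLeaves_connected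
    · refine induce_connected_of_patches (o ⟨g, hg⟩)
        (mem_supertreeLam_inl.2 ⟨v₀, ho _ hv₀g, hv₀⟩) fun {t} ht => ?_
      obtain ⟨v, hvt, hgv⟩ := mem_supertreeLam_inl.1 ht
      exact ⟨{t | v ∈ d.bags t}, fun t' ht' => mem_supertreeLam_inl.2 ⟨v, ht', hgv⟩,
        ho ⟨g, hg⟩ (mem_otherEdges.1 hgv).2.2, hvt, (d.bags_conn v).preconnected _ _⟩
    · intro f hf
      rcases mem_supertreeLam_inr.1 hf with rfl | ⟨v, hvf, hgv⟩
      exacts [mem_supertreeLam_inl.2 ⟨v₀, ho f hv₀g, hv₀⟩,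
        mem_supertreeLam_inl.2 ⟨v, ho f hvf, hgv⟩]
  · push Not at hA
    refine induce_connected_of_subsingleton
      ((Set.subsingleton_singleton (a := Sum.inr ⟨g, hg⟩)).anti ?_)
      ⟨.inr ⟨g, hg⟩, mem_supertreeLam_inr.2 (Or.inl rfl)⟩
    rintro (t | f) hgx
    · obtain ⟨v, -, hgv⟩ := mem_supertreeLam_inl.1 hgx
      exact absurd hgv (hA v)
    · rcases mem_supertreeLam_inr.1 hgx with rfl | ⟨v, -, hgv⟩
      exacts [rfl, absurd hgv (hA v)]

theorem supertreeLam_subset (x : d.τ ⊕ {f // f ∈ H.F}) : d.supertreeLam e x ⊆ H.F := by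
  intro g hg
  rcases x with t | f
  · obtain ⟨v, -, hgv⟩ := mem_supertreeLam_inl.1 hg
    exact (mem_otherEdges.1 hgv).2.1
  · rcases mem_supertreeLam_inr.1 hg with rfl | ⟨v, -, hgv⟩
    exacts [f.2, (mem_otherEdges.1 hgv).2.1]

theorem exists_mem_supertreeLam_of_mem_supertreeBags (x : d.τ ⊕ {f // f ∈ H.F}) :
    ∀ v ∈ d.supertreeBags e x, ∃ f ∈ d.supertreeLam e x, v ∈ f := by
  rcases x with t | f <;> intro v hv
  · obtain ⟨hvt, g, hg⟩ := Finset.mem_filter.1 hv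
    exact ⟨g, mem_supertreeLam_inl.2 ⟨v, hvt, hg⟩, (mem_otherEdges.1 hg).2.2⟩
  · exact ⟨f.1, mem_supertreeLam_inr.2 (Or.inl rfl), hv⟩

theorem exists_mem_supertreeLam_of_mem_of_mem {g h : Finset V} (hg : g ∈ H.F) (hh : h ∈ H.F)
    {v : V} (hvg : v ∈ g) (hvh : v ∈ h) : ∃ x, g ∈ d.supertreeLam e x ∧ h ∈ d.supertreeLam e x := by
  by_cases hge : g = e v
  · refine ⟨.inr ⟨g, hg⟩, mem_supertreeLam_inr.2 (Or.inl rfl), mem_supertreeLam_inr.2 ?_⟩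
    by_cases hhg : h = g
    exacts [Or.inl hhg, Or.inr ⟨v, hvg, mem_otherEdges.2 ⟨hge ▸ hhg, hh, hvh⟩⟩]
  · exact ⟨.inr ⟨h, hh⟩,
      mem_supertreeLam_inr.2 (Or.inr ⟨v, hvh, mem_otherEdges.2 ⟨hge, hg, hvg⟩⟩),
      mem_supertreeLam_inr.2 (Or.inl rfl)⟩

theorem card_supertreeLam_le (ho : ∀ f, f.1 ⊆ d.bags (o f)) (he : ∀ v, e v ∈ H.F ∧ v ∈ e v)
    (x : d.τ ⊕ {f // f ∈ H.F}) :
    (d.supertreeLam e x).card ≤ (H.maxDegree - 1) * (d.width + 1) + 1 := by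
  have hE := card_otherEdges_le he
  rcases x with t | f
  · calc (d.supertreeLam e (.inl t)).card ≤ (d.bags t).card * (H.maxDegree - 1) :=
          Finset.card_biUnion_le_card_mul _ _ _ fun v _ => hE v
      _ ≤ (H.maxDegree - 1) * (d.width + 1) + 1 := by
          rw [mul_comm]
          exact (Nat.mul_le_mul_left _ (d.card_bags_le_width_add_one t)).trans (Nat.le_succ _)
  · calc (d.supertreeLam e (.inr f)).card ≤ (f.1.biUnion (H.otherEdges e)).card + 1 :=
          Finset.card_insert_le _ _
      _ ≤ f.1.card * (H.maxDegree - 1) + 1 :=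
          Nat.add_le_add_right (Finset.card_biUnion_le_card_mul _ _ _ fun v _ => hE v) 1
      _ ≤ (H.maxDegree - 1) * (d.width + 1) + 1 := by
          rw [mul_comm]
          gcongr
          exact (Finset.card_le_card (ho f)).trans (d.card_bags_le_width_add_one _)

variable (d e o)

def toSupertreeDecomp (ho : ∀ f, f.1 ⊆ d.bags (o f)) (he : ∀ v, e v ∈ H.F ∧ v ∈ e v) :
    SupertreeDecomp H where
  τ := d.τ ⊕ {f // f ∈ H.F}
  finT := let := d.finT; inferInstance
  tree := d.tree.attachLeaves o
  conn := d.conn.attachLeaves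
  acyc := d.acyc.attachLeaves
  bags := d.supertreeBags e
  bags_conn := supertreeBags_connected ho he
  bags_edge _ _ := fun ⟨_, f, hf, hu, hv⟩ => ⟨.inr ⟨f, hf⟩, hu, hv⟩
  lam := d.supertreeLam e
  lam_sub := supertreeLam_subset
  bag_cover := exists_mem_supertreeLam_of_mem_supertreeBags
  lam_conn _ hg := supertreeLam_connected ho hg
  lam_meet _ hg _ hh := fun ⟨_, hv⟩ =>
    exists_mem_supertreeLam_of_mem_of_mem hg hh (mem_inter.1 hv).1 (mem_inter.1 hv).2

end TreeDecomp

theorem stw_le_width {H : SHypergraph V} (d : SupertreeDecomp H) : stw H ≤ d.width :=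
  Nat.sInf_le ⟨d, rfl⟩

theorem stw_le_of_treeDecomp {H : SHypergraph V} (d : TreeDecomp H.twoSection) :
    stw H ≤ (H.maxDegree - 1) * (d.width + 1) + 1 := by
  choose o ho using fun f : {f // f ∈ H.F} =>
    d.exists_subset_bags_of_pairwise_adj (s := f.1) fun u hu v hv huv => ⟨huv, f.1, f.2, hu, hv⟩
  choose e he using H.cover
  refine (stw_le_width (d.toSupertreeDecomp e o ho he)).trans ?_
  exact Finset.sup_le fun x _ => TreeDecomp.card_supertreeLam_le ho he x

/-- if `Δ ≥ 2` then `tw([H]₂) ≥ (stw(H) − 1)/(Δ − 1) − 1`, equivalently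
`stw(H) ≤ (Δ − 1)(tw([H]₂) + 1) + 1`. -/
theorem treewidth_twoSection_ge_stw_div (H : SHypergraph V) (hΔ : 2 ≤ H.maxDegree) :
    ((stw H : ℝ) - 1) / ((H.maxDegree : ℝ) - 1) - 1 ≤ (treewidth H.twoSection : ℝ) ∧
    stw H ≤ (H.maxDegree - 1) * (treewidth H.twoSection + 1) + 1 := by
  obtain ⟨d, hd⟩ := TreeDecomp.exists_width_eq_treewidth H.twoSection
  have hstw : stw H ≤ (H.maxDegree - 1) * (treewidth H.twoSection + 1) + 1 :=
    hd ▸ stw_le_of_treeDecomp d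
  refine ⟨?_, hstw⟩
  have hΔ' : (2 : ℝ) ≤ H.maxDegree := by exact_mod_cast hΔ
  have hstw' := (Nat.cast_le (α := ℝ)).2 hstw
  push_cast [Nat.cast_sub (one_le_two.trans hΔ)] at hstw'
  rw [sub_le_iff_le_add, div_le_iff₀ (by linarith)]
  linarith
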